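/- arXiv:1903.01233 — 7 statements merged into one kernel-verified Lean document; each statement's English description precedes it below -/
import Mathlib

section
/- Let n > 1 be a real number and let λ2, λ3, k be positive reals. Define f(x) = λ2 * x^n / (λ3^n + x^n) - k * x for x ≥ 0. If λ2 * (n-1)^((n-1)/n) > n * k * λ3, then f has exactly three nonnegative zeros: 0 and two positive zeros Tb_u < Tb_s. -/
/-! For `x > 0`, `f x = 0` iff `x ^ (n - 1) * (λ₂ - k x) = k λ₃ ^ n`. The left-hand side vanishes
at `0`, increases up to its critical point `(n - 1) λ₂ / (n k)` and then decreases to `-∞`; the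
hypothesis is the `n`-th root of the statement that its maximum exceeds `k λ₃ ^ n`. The
intermediate value theorem gives one positive root on each side of the peak, and strict
monotonicity on each side rules out any other. -/

open Real Set

theorem exists_two_preimages_of_unimodal {g : ℝ → ℝ} {a c X v : ℝ} (hac : a ≤ c) (hcX : c ≤ X)
    (hg : ContinuousOn g (Ici a)) (hmono : StrictMonoOn g (Icc a c))
    (hanti : StrictAntiOn g (Ici c)) (hva : g a < v) (hvc : v < g c) (hvX : g X < v) :
    ∃ u s, a < u ∧ u < s ∧ g u = v ∧ g s = v ∧ ∀ x, a ≤ x → g x = v → x = u ∨ x = s := by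
  obtain ⟨u, ⟨hau, huc⟩, hu⟩ :=
    intermediate_value_Ioo hac (hg.mono Icc_subset_Ici_self) ⟨hva, hvc⟩
  obtain ⟨s, ⟨hcs, -⟩, hs⟩ := intermediate_value_Ioo' hcX
    (hg.mono (Icc_subset_Ici_self.trans (Ici_subset_Ici.2 hac))) ⟨hvX, hvc⟩
  refine ⟨u, s, hau, huc.trans hcs, hu, hs, fun x hax hx => ?_⟩
  rcases le_total x c with hxc | hcx
  · exact Or.inl (hmono.injOn ⟨hax, hxc⟩ ⟨hau.le, huc.le⟩ (hx.trans hu.symm))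
  · exact Or.inr (hanti.injOn hcx hcs.le (hx.trans hs.symm))

noncomputable def hillProfile (n a b x : ℝ) : ℝ := x ^ (n - 1) * (a - b * x)

noncomputable def hillPeak (n a b : ℝ) : ℝ := (n - 1) * a / (n * b)

section HillProfile

variable {n a b c : ℝ}

theorem hillPeak_pos (hn : 1 < n) (ha : 0 < a) (hb : 0 < b) : 0 < hillPeak n a b :=
  div_pos (mul_pos (sub_pos.2 hn) ha) (mul_pos (zero_lt_one.trans hn) hb)

theorem hillProfile_zero (hn : 1 < n) : hillProfile n a b 0 = 0 := by
  simp [hillProfile, zero_rpow (sub_ne_zero.2 hn.ne')]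

theorem continuous_hillProfile (hn : 1 < n) : Continuous (hillProfile n a b) :=
  (continuous_rpow_const (sub_nonneg.2 hn.le)).mul (by fun_prop)

theorem hasDerivAt_hillProfile {x : ℝ} (hx : 0 < x) :
    HasDerivAt (hillProfile n a b) (x ^ (n - 2) * ((n - 1) * a - n * b * x)) x := by
  have hpow : HasDerivAt (fun x : ℝ => x ^ (n - 1)) ((n - 1) * x ^ (n - 2)) x := by
    convert hasDerivAt_rpow_const (p := n - 1) (Or.inl hx.ne') using 3; ring
  refine (hpow.mul (((hasDerivAt_id x).const_mul b).const_sub a)).congr_deriv ?_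
  have : x ^ (n - 1) = x ^ (n - 2) * x := by
    rw [← rpow_add_one hx.ne']; ring_nf
  rw [this, id]; ring

theorem strictMonoOn_hillProfile (hn : 1 < n) (hb : 0 < b) :
    StrictMonoOn (hillProfile n a b) (Icc 0 (hillPeak n a b)) := by
  refine strictMonoOn_of_deriv_pos (convex_Icc _ _) (continuous_hillProfile hn).continuousOn
    fun x hx => ?_
  rw [interior_Icc] at hx
  rw [(hasDerivAt_hillProfile hx.1).deriv]
  have : n * b * x < (n - 1) * a := by
    have := hx.2; rw [hillPeak, lt_div_iff₀ (by positivity)] at this; linarith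
  exact mul_pos (rpow_pos_of_pos hx.1 _) (by linarith)

theorem strictAntiOn_hillProfile (hn : 1 < n) (ha : 0 < a) (hb : 0 < b) :
    StrictAntiOn (hillProfile n a b) (Ici (hillPeak n a b)) := by
  have hpeak := hillPeak_pos hn ha hb
  refine strictAntiOn_of_deriv_neg (convex_Ici _) (continuous_hillProfile hn).continuousOn
    fun x hx => ?_
  rw [interior_Ici] at hx
  have hx0 : 0 < x := hpeak.trans hx
  rw [(hasDerivAt_hillProfile hx0).deriv]
  have : (n - 1) * a < n * b * x := by
    have := hx.out; rw [hillPeak, div_lt_iff₀ (by positivity)] at this; linarith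
  exact mul_neg_of_pos_of_neg (rpow_pos_of_pos hx0 _) (by linarith)

theorem hillProfile_neg {x : ℝ} (hb : 0 < b) (hx : a / b < x) (hx0 : 0 < x) :
    hillProfile n a b x < 0 := by
  refine mul_neg_of_pos_of_neg (rpow_pos_of_pos hx0 _) ?_
  rw [div_lt_iff₀ hb] at hx; linarith

theorem hillProfile_hillPeak (hn : 0 < n) (hb : 0 < b) :
    hillProfile n a b (hillPeak n a b) = hillPeak n a b ^ (n - 1) * (a / n) := by
  rw [hillProfile, hillPeak]; congr 1; field_simp; ring

theorem mul_rpow_lt_hillProfile_hillPeak (hn : 1 < n) (ha : 0 < a) (hb : 0 < b) (hc : 0 < c)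
    (h : n * b * c < a * (n - 1) ^ ((n - 1) / n)) :
    b * c ^ n < hillProfile n a b (hillPeak n a b) := by
  have hn0 : 0 < n := zero_lt_one.trans hn
  have hn1 : 0 < n - 1 := sub_pos.2 hn
  have hp := hillPeak_pos hn ha hb
  rw [hillProfile_hillPeak hn0 hb]
  set p := hillPeak n a b
  have hroot : (n - 1) ^ ((n - 1) / n) * (n - 1) ^ n⁻¹ = n - 1 := by
    rw [← rpow_add hn1, show (n - 1) / n + n⁻¹ = 1 by field_simp; ring, rpow_one]
  have hlt : c * (n - 1) ^ n⁻¹ < p := by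
    simp only [p, hillPeak]
    rw [lt_div_iff₀ (by positivity)]
    calc c * (n - 1) ^ n⁻¹ * (n * b) = n * b * c * (n - 1) ^ n⁻¹ := by ring
      _ < a * (n - 1) ^ ((n - 1) / n) * (n - 1) ^ n⁻¹ :=
        mul_lt_mul_of_pos_right h (rpow_pos_of_pos hn1 _)
      _ = (n - 1) * a := by rw [mul_assoc, hroot, mul_comm]
  have hpow : c ^ n * (n - 1) < p ^ n :=
    calc c ^ n * (n - 1) = (c * (n - 1) ^ n⁻¹) ^ n := by
          rw [mul_rpow hc.le (by positivity), rpow_inv_rpow hn1.le hn0.ne']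
      _ < p ^ n := rpow_lt_rpow (by positivity) hlt hn0
  have hbp : b * p = (n - 1) * (a / n) := by
    simp only [p, hillPeak]; field_simp
  rw [← mul_lt_mul_iff_of_pos_right hn1]
  calc b * c ^ n * (n - 1) = b * (c ^ n * (n - 1)) := by ring
    _ < b * p ^ n := mul_lt_mul_of_pos_left hpow hb
    _ = p ^ (n - 1) * (b * p) := by
      rw [mul_left_comm, ← rpow_add_one hp.ne', sub_add_cancel]
    _ = p ^ (n - 1) * (a / n) * (n - 1) := by rw [hbp]; ring

theorem hill_sub_linear_eq_zero_iff {x : ℝ} (hx : 0 < x) (hc : 0 < c) :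
    a * x ^ n / (c ^ n + x ^ n) - b * x = 0 ↔ hillProfile n a b x = b * c ^ n := by
  have hden : c ^ n + x ^ n ≠ 0 := (add_pos (rpow_pos_of_pos hc n) (rpow_pos_of_pos hx n)).ne'
  have hxn : x ^ n = x ^ (n - 1) * x := by rw [← rpow_add_one hx.ne']; ring_nf
  rw [sub_eq_zero, div_eq_iff hden, hillProfile, hxn]
  constructor
  · intro h
    apply mul_right_cancel₀ hx.ne'
    linear_combination h
  · intro h
    linear_combination x * h

end HillProfile

theorem stmt_0 (n lam2 lam3 k : ℝ) (hn : 1 < n) (h2 : 0 < lam2) (h3 : 0 < lam3)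
    (hk : 0 < k)
    (f : ℝ → ℝ) (hf : ∀ x, f x = lam2 * x ^ n / (lam3 ^ n + x ^ n) - k * x)
    (hcond : lam2 * (n - 1) ^ ((n - 1) / n) > n * k * lam3) :
    ∃ Tbu Tbs : ℝ, 0 < Tbu ∧ Tbu < Tbs ∧
      f 0 = 0 ∧ f Tbu = 0 ∧ f Tbs = 0 ∧
      ∀ x, 0 ≤ x → f x = 0 → x = 0 ∨ x = Tbu ∨ x = Tbs := by
  have hzero (x : ℝ) (hx : 0 < x) : f x = 0 ↔ hillProfile n lam2 k x = k * lam3 ^ n := by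
    rw [hf]; exact hill_sub_linear_eq_zero_iff hx h3
  have hpeak := hillPeak_pos hn h2 hk
  set X := max (hillPeak n lam2 k) (lam2 / k) + 1
  have hpeak_le : hillPeak n lam2 k ≤ X := by
    linarith [le_max_left (hillPeak n lam2 k) (lam2 / k)]
  have hX_neg : hillProfile n lam2 k X < 0 :=
    hillProfile_neg hk (by linarith [le_max_right (hillPeak n lam2 k) (lam2 / k)])
      (hpeak.trans_le hpeak_le)
  obtain ⟨u, s, hu0, hus, hu, hs, hroots⟩ := exists_two_preimages_of_unimodal hpeak.le hpeak_le
    (continuous_hillProfile hn).continuousOn (strictMonoOn_hillProfile hn hk)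
    (strictAntiOn_hillProfile hn h2 hk) (by rw [hillProfile_zero hn]; positivity)
    (mul_rpow_lt_hillProfile_hillPeak hn h2 hk h3 hcond) (hX_neg.trans (by positivity))
  refine ⟨u, s, hu0, hus, by simp [hf, zero_rpow (zero_lt_one.trans hn).ne'],
    (hzero u hu0).2 hu, (hzero s (hu0.trans hus)).2 hs, fun x hx hfx => ?_⟩
  rcases hx.eq_or_lt with rfl | hx
  · exact Or.inl rfl
  · exact Or.inr (hroots x hx.le ((hzero x hx).1 hfx))
end

section
/- Let n > 1 and λ2, λ3, k > 0. If λ2 * (n-1)^((n-1)/n) < n * k * λ3, then 0 is the unique nonnegative zero of f(x) = λ2 * x^n/(λ3^n + x^n) - k x, and moreover f(x) < 0 for all x > 0. -/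
/-!
Dividing by `x > 0`, the claim `f x < 0` reads `λ₂ x^(n-1) < k (λ₃^n + x^n)`. Weighted AM-GM with
weights `(n-1)/n` and `1/n` applied to `n x^n / (n-1)` and `n λ₃^n` gives
`n λ₃ x^(n-1) ≤ (n-1)^((n-1)/n) (x^n + λ₃^n)`, i.e. `(n-1)^((n-1)/n) / (n λ₃)` is the maximum of
`x^(n-1) / (λ₃^n + x^n)`; the hypothesis on `λ₂` says precisely that `λ₂ / k` lies below it.
-/

open Real

theorem mul_mul_rpow_sub_one_le {n c x : ℝ} (hn : 1 < n) (hc : 0 ≤ c) (hx : 0 ≤ x) :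
    n * c * x ^ (n - 1) ≤ (n - 1) ^ ((n - 1) / n) * (x ^ n + c ^ n) := by
  have hn0 : 0 < n := by linarith
  have hn1 : 0 < n - 1 := by linarith
  have hweights : (n - 1) / n + 1 / n = 1 := by field_simp; ring
  have amgm := geom_mean_le_arith_mean2_weighted (by positivity) (by positivity)
    (by positivity : 0 ≤ n / (n - 1) * x ^ n) (by positivity : 0 ≤ n * c ^ n) hweights
  have hgeom : (n / (n - 1) * x ^ n) ^ ((n - 1) / n) * (n * c ^ n) ^ (1 / n)
      = n * c * x ^ (n - 1) / (n - 1) ^ ((n - 1) / n) := by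
    have hn_split : n ^ ((n - 1) / n) * n ^ (1 / n) = n := by
      rw [← rpow_add hn0, hweights, rpow_one]
    rw [mul_rpow (by positivity) (by positivity), mul_rpow hn0.le (by positivity),
      div_rpow hn0.le hn1.le, ← rpow_mul hx, ← rpow_mul hc,
      mul_div_cancel₀ _ hn0.ne', mul_one_div_cancel hn0.ne', rpow_one]
    linear_combination c * x ^ (n - 1) / (n - 1) ^ ((n - 1) / n) * hn_split
  have harith : (n - 1) / n * (n / (n - 1) * x ^ n) + 1 / n * (n * c ^ n) = x ^ n + c ^ n := by
    field_simp
  rwa [hgeom, harith, div_le_iff₀' (by positivity)] at amgm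

theorem mul_rpow_div_add_rpow_lt_mul {n lam2 lam3 k x : ℝ} (hn : 1 < n) (h3 : 0 ≤ lam3)
    (hk : 0 ≤ k) (hcond : lam2 * (n - 1) ^ ((n - 1) / n) < n * k * lam3) (hx : 0 < x) :
    lam2 * x ^ n / (lam3 ^ n + x ^ n) < k * x := by
  have hw : 0 < (n - 1) ^ ((n - 1) / n) := rpow_pos_of_pos (by linarith) _
  have hxn1 : 0 < x ^ (n - 1) := rpow_pos_of_pos hx _
  have hreduced : lam2 * x ^ (n - 1) < k * (lam3 ^ n + x ^ n) := by
    have hamgm := mul_le_mul_of_nonneg_left (mul_mul_rpow_sub_one_le hn h3 hx.le) hk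
    refine lt_of_mul_lt_mul_right ?_ hw.le
    nlinarith [mul_lt_mul_of_pos_right hcond hxn1]
  have hsplit : x ^ n = x ^ (n - 1) * x := by
    rw [← rpow_add_one hx.ne', sub_add_cancel]
  rw [div_lt_iff₀ (by positivity)]
  calc lam2 * x ^ n = lam2 * x ^ (n - 1) * x := by rw [hsplit]; ring
    _ < k * (lam3 ^ n + x ^ n) * x := mul_lt_mul_of_pos_right hreduced hx
    _ = k * x * (lam3 ^ n + x ^ n) := by ring

theorem stmt_3_general (n lam2 lam3 k : ℝ) (hn : 1 < n) (h3 : 0 < lam3)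
    (hk : 0 < k)
    (f : ℝ → ℝ) (hf : ∀ x, f x = lam2 * x ^ n / (lam3 ^ n + x ^ n) - k * x)
    (hcond : lam2 * (n - 1) ^ ((n - 1) / n) < n * k * lam3) :
    (∀ x, 0 ≤ x → (f x = 0 ↔ x = 0)) ∧ ∀ x, 0 < x → f x < 0 := by
  have hneg : ∀ x, 0 < x → f x < 0 := fun x hx => by
    rw [hf, sub_neg]
    exact mul_rpow_div_add_rpow_lt_mul hn h3.le hk.le hcond hx
  refine ⟨fun x hx => ⟨fun hfx => ?_, fun hx0 => ?_⟩, hneg⟩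
  · by_contra hx0
    exact (hneg x (lt_of_le_of_ne hx (Ne.symm hx0))).ne hfx
  · rw [hx0, hf, zero_rpow (by linarith)]
    simp

theorem stmt_3 (n lam2 lam3 k : ℝ) (hn : 1 < n) (h2 : 0 < lam2) (h3 : 0 < lam3)
    (hk : 0 < k)
    (f : ℝ → ℝ) (hf : ∀ x, f x = lam2 * x ^ n / (lam3 ^ n + x ^ n) - k * x)
    (hcond : lam2 * (n - 1) ^ ((n - 1) / n) < n * k * lam3) :
    (∀ x, 0 ≤ x → (f x = 0 ↔ x = 0)) ∧ ∀ x, 0 < x → f x < 0 :=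
  stmt_3_general n lam2 lam3 k hn h3 hk f hf hcond
end

section
/- Let n > 1 and λ2, λ3, k > 0 with λ2 * (n-1)^((n-1)/n) = n * k * λ3. Then f(x) = λ2 * x^n/(λ3^n + x^n) - k x has exactly two nonnegative zeros: 0 and the double root x* = λ3 * (n-1)^(1/n), and f(x) ≤ 0 for all x ≥ 0. -/
/-!
Clearing the denominator, `f x = x * (λ₂ x^(n-1) - k (λ₃^n + x^n)) / (λ₃^n + x^n)` for `x ≥ 0`.
With `x* = λ₃ (n-1)^(1/n)` the hypothesis reads `λ₂ (n-1) = n k x*`, and then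
`λ₂ x^(n-1) ≤ k (λ₃^n + x^n)` is the weighted AM-GM inequality
`(x^n)^((n-1)/n) (x*^n)^(1/n) ≤ (n-1)/n x^n + 1/n x*^n`, with equality exactly at `x = x*`.
So `f ≤ 0` on `[0, ∞)` and vanishes only at `0` and `x*`; since `x*` is then an interior
maximum of `f`, Fermat's theorem gives `f' x* = 0`.
-/

open Real

namespace Real

variable {p a b x : ℝ}

theorem mul_rpow_one_div_rpow (ha : 0 ≤ a) (hb : 0 ≤ b) (hp : p ≠ 0) :
    (a * b ^ (1 / p)) ^ p = b * a ^ p := by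
  rw [mul_rpow ha (rpow_nonneg hb _), ← rpow_mul hb, one_div_mul_cancel hp, rpow_one, mul_comm]

private lemma mul_mul_rpow_sub_one_eq_geom_mean (hp : 0 < p) (ha : 0 ≤ a) (hx : 0 ≤ x) :
    p * a * x ^ (p - 1) = p * ((x ^ p) ^ ((p - 1) / p) * (a ^ p) ^ (1 / p)) := by
  rw [← rpow_mul hx, one_div, rpow_rpow_inv ha hp.ne', mul_div_cancel₀ _ hp.ne']
  ring

private lemma sub_one_mul_rpow_add_eq_arith_mean (hp : 0 < p) :
    (p - 1) * x ^ p + a ^ p = p * ((p - 1) / p * x ^ p + 1 / p * a ^ p) := by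
  field_simp

theorem mul_mul_rpow_sub_one_le (hp : 1 < p) (ha : 0 ≤ a) (hx : 0 ≤ x) :
    p * a * x ^ (p - 1) ≤ (p - 1) * x ^ p + a ^ p := by
  have hp0 : 0 < p := by linarith
  rw [mul_mul_rpow_sub_one_eq_geom_mean hp0 ha hx, sub_one_mul_rpow_add_eq_arith_mean hp0]
  exact mul_le_mul_of_nonneg_left (geom_mean_le_arith_mean2_weighted (by bound) (by positivity)
    (rpow_nonneg hx p) (rpow_nonneg ha p) (by field_simp; ring)) hp0.le

theorem mul_mul_rpow_sub_one_lt (hp : 1 < p) (ha : 0 ≤ a) (hx : 0 ≤ x) (hxa : x ≠ a) :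
    p * a * x ^ (p - 1) < (p - 1) * x ^ p + a ^ p := by
  have hp0 : 0 < p := by linarith
  rw [mul_mul_rpow_sub_one_eq_geom_mean hp0 ha hx, sub_one_mul_rpow_add_eq_arith_mean hp0]
  refine mul_lt_mul_of_pos_left ((geom_mean_lt_arith_mean2_weighted_iff_of_pos
    (div_pos (by linarith) hp0) (by positivity) (rpow_nonneg hx p) (rpow_nonneg ha p)
    (by field_simp; ring)).2 ?_) hp0
  exact (rpow_left_inj hx ha hp0.ne').not.2 hxa

end Real

section HillFunction

variable {n lam2 lam3 k xs x : ℝ}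

theorem mul_sub_one_eq_of_saddle_node (hn : 1 < n)
    (hcond : lam2 * (n - 1) ^ ((n - 1) / n) = n * k * lam3) :
    lam2 * (n - 1) = n * k * (lam3 * (n - 1) ^ (1 / n)) := by
  have hsplit : (n - 1) ^ ((n - 1) / n) * (n - 1) ^ (1 / n) = n - 1 := by
    rw [← rpow_add (by linarith), ← add_div, sub_add_cancel, div_self (by linarith), rpow_one]
  linear_combination (n - 1) ^ (1 / n) * hcond - lam2 * hsplit

theorem hill_sub_linear_eq (hn : n ≠ 0) (h3 : 0 < lam3) (hx : 0 ≤ x) :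
    lam2 * x ^ n / (lam3 ^ n + x ^ n) - k * x
      = x * (lam2 * x ^ (n - 1) - k * (lam3 ^ n + x ^ n)) / (lam3 ^ n + x ^ n) := by
  have hden : 0 < lam3 ^ n + x ^ n := by positivity
  have hsucc : x ^ (n - 1) * x = x ^ n := by
    rw [← rpow_add_one' hx (by simpa using hn), sub_add_cancel]
  field_simp
  linear_combination -lam2 * hsucc

theorem sub_one_mul_hill_gap_eq (hpow : xs ^ n = (n - 1) * lam3 ^ n)
    (hcrit : lam2 * (n - 1) = n * k * xs) :
    (n - 1) * (k * (lam3 ^ n + x ^ n) - lam2 * x ^ (n - 1))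
      = k * ((n - 1) * x ^ n + xs ^ n - n * xs * x ^ (n - 1)) := by
  linear_combination -k * hpow - x ^ (n - 1) * hcrit

theorem mul_rpow_sub_one_le_of_critical (hn : 1 < n) (hk : 0 < k) (hxs : 0 ≤ xs)
    (hpow : xs ^ n = (n - 1) * lam3 ^ n) (hcrit : lam2 * (n - 1) = n * k * xs) (hx : 0 ≤ x) :
    lam2 * x ^ (n - 1) ≤ k * (lam3 ^ n + x ^ n) := by
  have hgap : 0 ≤ (n - 1) * (k * (lam3 ^ n + x ^ n) - lam2 * x ^ (n - 1)) := by
    rw [sub_one_mul_hill_gap_eq hpow hcrit]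
    exact mul_nonneg hk.le (sub_nonneg.2 (mul_mul_rpow_sub_one_le hn hxs hx))
  exact sub_nonneg.1 ((mul_nonneg_iff_of_pos_left (sub_pos.2 hn)).1 hgap)

theorem mul_rpow_sub_one_eq_iff_of_critical (hn : 1 < n) (hk : 0 < k) (hxs : 0 < xs)
    (hpow : xs ^ n = (n - 1) * lam3 ^ n) (hcrit : lam2 * (n - 1) = n * k * xs) (hx : 0 ≤ x) :
    lam2 * x ^ (n - 1) = k * (lam3 ^ n + x ^ n) ↔ x = xs := by
  constructor
  · intro heq
    by_contra hne
    have hgap : 0 < (n - 1) * (k * (lam3 ^ n + x ^ n) - lam2 * x ^ (n - 1)) := by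
      rw [sub_one_mul_hill_gap_eq hpow hcrit]
      exact mul_pos hk (sub_pos.2 (mul_mul_rpow_sub_one_lt hn hxs.le hx hne))
    simp [heq] at hgap
  · rintro rfl
    have hsucc : x ^ (n - 1) * x = x ^ n := by
      rw [← rpow_add_one hxs.ne', sub_add_cancel]
    refine mul_left_cancel₀ (mul_pos (sub_pos.2 hn) hxs).ne' ?_
    linear_combination x ^ (n - 1) * x * hcrit + n * k * x * hsucc + k * x * hpow

end HillFunction

theorem stmt_4_general (n lam2 lam3 k : ℝ) (hn : 1 < n) (h3 : 0 < lam3)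
    (hk : 0 < k)
    (f : ℝ → ℝ) (hf : ∀ x, f x = lam2 * x ^ n / (lam3 ^ n + x ^ n) - k * x)
    (hcond : lam2 * (n - 1) ^ ((n - 1) / n) = n * k * lam3) :
    f 0 = 0 ∧ f (lam3 * (n - 1) ^ (1 / n)) = 0 ∧
      deriv f (lam3 * (n - 1) ^ (1 / n)) = 0 ∧
      (∀ x, 0 ≤ x → f x = 0 → x = 0 ∨ x = lam3 * (n - 1) ^ (1 / n)) ∧
      ∀ x, 0 ≤ x → f x ≤ 0 := by
  set xs := lam3 * (n - 1) ^ (1 / n)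
  have hn0 : n ≠ 0 := by linarith
  have hxs : 0 < xs := mul_pos h3 (rpow_pos_of_pos (sub_pos.2 hn) _)
  have hpow : xs ^ n = (n - 1) * lam3 ^ n := mul_rpow_one_div_rpow h3.le (by linarith) hn0
  have hcrit := mul_sub_one_eq_of_saddle_node hn hcond
  have hden (x : ℝ) (hx : 0 ≤ x) : 0 < lam3 ^ n + x ^ n := by positivity
  have hfx (x : ℝ) (hx : 0 ≤ x) := (hf x).trans (hill_sub_linear_eq hn0 h3 hx)
  have hle (x : ℝ) (hx : 0 ≤ x) : f x ≤ 0 := by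
    rw [hfx x hx]
    exact div_nonpos_of_nonpos_of_nonneg (mul_nonpos_of_nonneg_of_nonpos hx (sub_nonpos.2
      (mul_rpow_sub_one_le_of_critical hn hk hxs.le hpow hcrit hx))) (hden x hx).le
  have hxs_zero : f xs = 0 := by
    rw [hfx xs hxs.le, (mul_rpow_sub_one_eq_iff_of_critical hn hk hxs hpow hcrit hxs.le).2 rfl]
    simp
  refine ⟨by simp [hf, zero_rpow hn0], hxs_zero, ?_, ?_, hle⟩
  · refine IsLocalMax.deriv_eq_zero ?_
    filter_upwards [Ioi_mem_nhds hxs] with x hx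
    exact hxs_zero ▸ hle x (le_of_lt hx)
  · intro x hx hfx0
    rw [hfx x hx, div_eq_zero_iff, mul_eq_zero, sub_eq_zero,
      mul_rpow_sub_one_eq_iff_of_critical hn hk hxs hpow hcrit hx] at hfx0
    exact hfx0.resolve_right (hden x hx).ne'

theorem stmt_4 (n lam2 lam3 k : ℝ) (hn : 1 < n) (h2 : 0 < lam2) (h3 : 0 < lam3)
    (hk : 0 < k)
    (f : ℝ → ℝ) (hf : ∀ x, f x = lam2 * x ^ n / (lam3 ^ n + x ^ n) - k * x)
    (hcond : lam2 * (n - 1) ^ ((n - 1) / n) = n * k * lam3) :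
    f 0 = 0 ∧ f (lam3 * (n - 1) ^ (1 / n)) = 0 ∧
      deriv f (lam3 * (n - 1) ^ (1 / n)) = 0 ∧
      (∀ x, 0 ≤ x → f x = 0 → x = 0 ∨ x = lam3 * (n - 1) ^ (1 / n)) ∧
      ∀ x, 0 ≤ x → f x ≤ 0 :=
  stmt_4_general n lam2 lam3 k hn h3 hk f hf hcond
end

section
/- Let n > 1 and λ2, λ3, k > 0 with λ2 * (n-1)^((n-1)/n) > n * k * λ3, and let 0 < Tb_u < Tb_s be the two positive zeros of f(x) = λ2 * x^n/(λ3^n + x^n) - k x. Then f(x) < 0 for x ∈ (0, Tb_u), f(x) > 0 for x ∈ (Tb_u, Tb_s), and f(x) < 0 for x > Tb_s. -/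
/-!
For `x > 0`, writing `c = λ₃ⁿ`,
`f x = xⁿ / (c + xⁿ) * (λ₂ - ψ x)` with `ψ x = k (c x^(1-n) + x)`.
The first factor is positive and `ψ` is strictly convex on `(0, ∞)` because `1 - n < 0`,
so `ψ` takes the value `λ₂` at the two zeros `Tb_u < Tb_s` and lies strictly below it between
them and strictly above it outside.
-/

open Real Set

theorem StrictConvexOn.const_mul {E : Type*} [AddCommMonoid E] [Module ℝ E] {s : Set E}
    {f : E → ℝ} {c : ℝ} (hc : 0 < c) (hf : StrictConvexOn ℝ s f) :
    StrictConvexOn ℝ s fun x => c * f x := by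
  refine ⟨hf.1, fun x hx y hy hxy a b ha hb hab => ?_⟩
  have := mul_lt_mul_of_pos_left (hf.2 hx hy hxy ha hb hab) hc
  simp only [smul_eq_mul] at this ⊢
  linarith

theorem StrictConvexOn.lt_of_mem_openSegment_of_le {𝕜 E β : Type*} [Semiring 𝕜] [PartialOrder 𝕜]
    [AddCommMonoid E] [SMul 𝕜 E] [AddCommMonoid β] [LinearOrder β] [IsOrderedAddMonoid β]
    [Module 𝕜 β] [PosSMulStrictMono 𝕜 β] {s : Set E} {f : E → β}
    (hf : StrictConvexOn 𝕜 s f) {x y z : E} (hx : x ∈ s) (hy : y ∈ s) (hxy : x ≠ y)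
    (hz : z ∈ openSegment 𝕜 x y) (hyz : f y ≤ f z) : f z < f x :=
  (lt_max_iff.1 (hf.lt_on_openSegment hx hy hxy hz)).resolve_right hyz.not_gt

section LevelSet

variable {s : Set ℝ} {g : ℝ → ℝ} {a b v : ℝ}

theorem StrictConvexOn.lt_of_mem_Ioo_of_eq (hg : StrictConvexOn ℝ s g) (ha : a ∈ s) (hb : b ∈ s)
    (hga : g a = v) (hgb : g b = v) {x : ℝ} (hx : x ∈ Ioo a b) : g x < v := by
  have hab : a < b := hx.1.trans hx.2
  have := hg.lt_on_openSegment ha hb hab.ne (by rwa [openSegment_eq_Ioo hab])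
  rwa [hga, hgb, max_self] at this

theorem StrictConvexOn.lt_of_lt_left_of_eq (hg : StrictConvexOn ℝ s g) (hb : b ∈ s) (hab : a < b)
    (hga : g a = v) (hgb : g b = v) {x : ℝ} (hx : x ∈ s) (hxa : x < a) : v < g x := by
  rw [← hga]
  refine hg.lt_of_mem_openSegment_of_le hx hb (ne_of_lt (hxa.trans hab)) ?_ (by rw [hga, hgb])
  rw [openSegment_eq_Ioo (hxa.trans hab)]
  exact ⟨hxa, hab⟩

theorem StrictConvexOn.lt_of_right_lt_of_eq (hg : StrictConvexOn ℝ s g) (ha : a ∈ s) (hab : a < b)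
    (hga : g a = v) (hgb : g b = v) {x : ℝ} (hx : x ∈ s) (hbx : b < x) : v < g x := by
  rw [← hgb]
  refine hg.lt_of_mem_openSegment_of_le hx ha (ne_of_gt (hab.trans hbx)) ?_ (by rw [hga, hgb])
  rw [openSegment_symm, openSegment_eq_Ioo (hab.trans hbx)]
  exact ⟨hab, hbx⟩

end LevelSet

theorem strictConvexOn_rpow_of_neg {p : ℝ} (hp : p < 0) :
    StrictConvexOn ℝ (Ioi 0) fun x : ℝ => x ^ p := by
  refine StrictMonoOn.strictConvexOn_of_deriv (convex_Ioi 0)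
    (continuousOn_id.rpow_const fun x hx => Or.inl (ne_of_gt hx)) ?_
  rw [interior_Ioi, deriv_rpow_const']
  intro x hx y _ hxy
  have := rpow_lt_rpow_of_neg hx hxy (by linarith : p - 1 < 0)
  dsimp only
  nlinarith

theorem hill_sub_linear_eq_mul {x : ℝ} (hx : 0 < x) (n a c k : ℝ) (hc : 0 ≤ c) :
    a * x ^ n / (c + x ^ n) - k * x = x ^ n / (c + x ^ n) * (a - k * (c * x ^ (1 - n) + x)) := by
  have hmul : x ^ (1 - n) * x ^ n = x := by rw [← rpow_add hx]; norm_num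
  field_simp
  linear_combination k * c * hmul

theorem stmt_6_general (n lam2 lam3 k : ℝ) (hn : 1 < n) (h3 : 0 < lam3)
    (hk : 0 < k)
    (f : ℝ → ℝ) (hf : ∀ x, f x = lam2 * x ^ n / (lam3 ^ n + x ^ n) - k * x)
    (Tbu Tbs : ℝ) (hu : 0 < Tbu) (hus : Tbu < Tbs)
    (hfu : f Tbu = 0) (hfs : f Tbs = 0) :
    (∀ x ∈ Ioo 0 Tbu, f x < 0) ∧ (∀ x ∈ Ioo Tbu Tbs, f x > 0) ∧
      ∀ x, Tbs < x → f x < 0 := by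
  set c := lam3 ^ n
  have hc : 0 < c := rpow_pos_of_pos h3 n
  set ψ : ℝ → ℝ := fun x => k * (c * x ^ (1 - n) + x)
  have hψ : StrictConvexOn ℝ (Ioi 0) ψ :=
    (((strictConvexOn_rpow_of_neg (by linarith : 1 - n < 0)).const_mul hc).add_convexOn
      (convexOn_id (convex_Ioi 0))).const_mul hk
  have hweight : ∀ x, 0 < x → 0 < x ^ n / (c + x ^ n) := fun x hx =>
    div_pos (rpow_pos_of_pos hx n) (by positivity)
  have hfψ : ∀ x, 0 < x → f x = x ^ n / (c + x ^ n) * (lam2 - ψ x) := fun x hx =>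
    (hf x).trans (hill_sub_linear_eq_mul hx n lam2 c k hc.le)
  have hzero : ∀ x, 0 < x → f x = 0 → ψ x = lam2 := fun x hx h0 => by
    rw [hfψ x hx, mul_eq_zero] at h0
    exact (sub_eq_zero.1 (h0.resolve_left (hweight x hx).ne')).symm
  have hneg : ∀ x, 0 < x → lam2 < ψ x → f x < 0 := fun x hx h => by
    rw [hfψ x hx]; exact mul_neg_of_pos_of_neg (hweight x hx) (sub_neg.2 h)
  have hs : 0 < Tbs := hu.trans hus
  have hψu := hzero Tbu hu hfu
  have hψs := hzero Tbs hs hfs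
  refine ⟨fun x ⟨hx0, hxu⟩ => hneg x hx0 ?_, fun x hx => ?_, fun x hsx => hneg x (hs.trans hsx) ?_⟩
  · exact hψ.lt_of_lt_left_of_eq hs hus hψu hψs hx0 hxu
  · rw [hfψ x (hu.trans hx.1)]
    exact mul_pos (hweight x (hu.trans hx.1)) (sub_pos.2 (hψ.lt_of_mem_Ioo_of_eq hu hs hψu hψs hx))
  · exact hψ.lt_of_right_lt_of_eq hu hus hψu hψs (mem_Ioi.2 (hs.trans hsx)) hsx

theorem stmt_6 (n lam2 lam3 k : ℝ) (hn : 1 < n) (h2 : 0 < lam2) (h3 : 0 < lam3)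
    (hk : 0 < k)
    (f : ℝ → ℝ) (hf : ∀ x, f x = lam2 * x ^ n / (lam3 ^ n + x ^ n) - k * x)
    (hcond : lam2 * (n - 1) ^ ((n - 1) / n) > n * k * lam3)
    (Tbu Tbs : ℝ) (hu : 0 < Tbu) (hus : Tbu < Tbs)
    (hfu : f Tbu = 0) (hfs : f Tbs = 0) :
    (∀ x ∈ Ioo 0 Tbu, f x < 0) ∧ (∀ x ∈ Ioo Tbu Tbs, f x > 0) ∧
      ∀ x, Tbs < x → f x < 0 :=
  stmt_6_general n lam2 lam3 k hn h3 hk f hf Tbu Tbs hu hus hfu hfs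
end

section
/- Let n > 1 and λ2, λ3, k > 0 with λ2 * (n-1)^((n-1)/n) > n * k * λ3, and let Tb_u < Tb_s be the two positive steady states of x' = f(x) with f(x) = λ2 x^n/(λ3^n + x^n) - k x. If x is a global solution with x(0) ∈ (Tb_u, Tb_s), then x is strictly increasing and x(t) → Tb_s as t → ∞; if x(0) ∈ (0, Tb_u), then x is strictly decreasing and x(t) → 0 as t → ∞. -/
/-! The equilibria `Tbu < Tbs` of the locally Lipschitz field `f` cannot be reached in finite time
(a solution reaching one would coincide with the constant solution), so a solution starting in
`(0, Tbu)` or in `(Tbu, Tbs)` stays there. On each of these intervals `f` is continuous without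
zeros, hence of constant sign: negative on `(0, Tbu)` since `f x ≈ -k x` near `0`, positive on
`(Tbu, Tbs)` at the maximiser of the per-capita activation. The solution is therefore monotone and
bounded; its limit is an equilibrium, hence the endpoint it moves towards. -/

open Real Set Filter Topology

theorem IsPreconnected.forall_pos_of_ne_zero {X : Type*} [TopologicalSpace X] {S : Set X}
    {g : X → ℝ} (hS : IsPreconnected S) (hg : ContinuousOn g S) (hne : ∀ z ∈ S, g z ≠ 0)
    {p : X} (hp : p ∈ S) (hgp : 0 < g p) : ∀ z ∈ S, 0 < g z := by
  intro z hz
  by_contra! hgz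
  obtain ⟨c, hc, hgc⟩ := hS.intermediate_value hz hp hg ⟨hgz, hgp.le⟩
  exact hne c hc hgc

theorem IsPreconnected.forall_neg_of_ne_zero {X : Type*} [TopologicalSpace X] {S : Set X}
    {g : X → ℝ} (hS : IsPreconnected S) (hg : ContinuousOn g S) (hne : ∀ z ∈ S, g z ≠ 0)
    {p : X} (hp : p ∈ S) (hgp : g p < 0) : ∀ z ∈ S, g z < 0 := fun z hz =>
  neg_pos.1 <| hS.forall_pos_of_ne_zero hg.neg (fun z hz => neg_ne_zero.2 (hne z hz)) hp
    (neg_pos.2 hgp) z hz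

section Autonomous

variable {f x : ℝ → ℝ} {K : NNReal} {a b t₀ : ℝ}

/-- At the first exit time from `(a, b)` the solution would agree with a constant solution. -/
theorem ODE_solution_mem_Ioo_of_le (hf : LipschitzOnWith K f (Icc a b)) (ha : f a = 0)
    (hb : f b = 0) (hx : ∀ t, HasDerivAt x (f (x t)) t) (h₀ : x t₀ ∈ Ioo a b) {t : ℝ}
    (ht : t₀ ≤ t) : x t ∈ Ioo a b := by
  have hcont : Continuous x := continuous_iff_continuousAt.2 fun t => (hx t).continuousAt
  by_contra hxt
  set S := Icc t₀ t ∩ x ⁻¹' (Ioo a b)ᶜ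
  have hSbdd : BddBelow S := ⟨t₀, fun s hs => hs.1.1⟩
  set τ := sInf S
  obtain ⟨⟨hτ₀, -⟩, hxτ⟩ : τ ∈ S :=
    (isClosed_Icc.inter (isOpen_Ioo.preimage hcont).isClosed_compl).csInf_mem
      ⟨t, ⟨ht, le_rfl⟩, hxt⟩ hSbdd
  have hτt : τ ≤ t := csInf_le hSbdd ⟨⟨ht, le_rfl⟩, hxt⟩
  have hτ : t₀ < τ := hτ₀.lt_of_ne fun h => hxτ (h ▸ h₀)
  have hbefore : MapsTo x (Ico t₀ τ) (Icc a b) := fun s hs =>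
    Ioo_subset_Icc_self <| by_contra fun h =>
      (csInf_le hSbdd ⟨⟨hs.1, hs.2.le.trans hτt⟩, h⟩).not_gt hs.2
  have hIcc : ∀ s ∈ Icc t₀ τ, x s ∈ Icc a b := fun s hs => by
    simpa using map_mem_closure hcont (by rwa [closure_Ico hτ.ne]) hbefore
  have hzero : f (x τ) = 0 := by
    have hxτ' := hIcc τ ⟨hτ.le, le_rfl⟩
    rcases hxτ'.1.eq_or_lt with h | h
    · rw [← h, ha]
    · rw [le_antisymm hxτ'.2 (not_lt.1 fun h' => hxτ ⟨h, h'⟩), hb]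
  have heq : EqOn x (fun _ => x τ) (Icc t₀ τ) :=
    ODE_solution_unique_of_mem_Icc_left (v := fun _ => f) (s := fun _ => Icc a b)
      (fun _ _ => hf) hcont.continuousOn (fun s _ => (hx s).hasDerivWithinAt)
      (fun s hs => hIcc s (Ioc_subset_Icc_self hs)) continuousOn_const
      (fun s _ => by simpa [hzero] using hasDerivWithinAt_const s (Iic s) (x τ))
      (fun _ _ => hIcc τ ⟨hτ.le, le_rfl⟩) rfl
  exact hxτ (by simpa [heq ⟨le_rfl, hτ.le⟩] using h₀)

theorem ODE_solution_mem_Ioo (hf : LipschitzOnWith K f (Icc a b)) (ha : f a = 0)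
    (hb : f b = 0) (hx : ∀ t, HasDerivAt x (f (x t)) t) (h₀ : x t₀ ∈ Ioo a b) (t : ℝ) :
    x t ∈ Ioo a b := by
  rcases le_total t₀ t with ht | ht
  · exact ODE_solution_mem_Ioo_of_le hf ha hb hx h₀ ht
  · -- run time backwards: `s ↦ x (-s)` solves `y' = -f y`
    have hrev : ∀ s, HasDerivAt (fun s => x (-s)) ((-f) (x (-s))) s := fun s =>
      ((hx (-s)).comp s (hasDerivAt_neg s)).congr_deriv (by simp)
    simpa using ODE_solution_mem_Ioo_of_le hf.neg (by simp [ha]) (by simp [hb]) hrev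
      (by simpa using h₀) (neg_le_neg ht)

theorem ODE_rhs_eq_zero_of_tendsto {s : Set ℝ} {l : ℝ} (hx : ∀ t, HasDerivAt x (f (x t)) t)
    (hs : ∀ t, x t ∈ s) (hf : ContinuousWithinAt f s l) (hl : Tendsto x atTop (𝓝 l)) :
    f l = 0 := by
  have hfx : Tendsto (fun t => f (x t)) atTop (𝓝 (f l)) :=
    hf.tendsto.comp (tendsto_nhdsWithin_iff.2 ⟨hl, Eventually.of_forall hs⟩)
  have hstep : Tendsto (fun t => x (t + 1) - x t) atTop (𝓝 0) := by
    simpa using (hl.comp (tendsto_atTop_add_const_right _ 1 tendsto_id)).sub hl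
  by_contra hne
  have hε : 0 < |f l| / 2 := by positivity
  obtain ⟨T, hT⟩ := eventually_atTop.1 <| (hfx.eventually (Metric.ball_mem_nhds _ hε)).and
    (hstep.eventually (Metric.ball_mem_nhds _ hε))
  -- `x (T + 1) - x T` is small, yet by the mean value theorem it is a value `f (x ξ)` near `f l`
  obtain ⟨ξ, hξ, hslope⟩ := exists_hasDerivAt_eq_slope x (fun t => f (x t)) (lt_add_one T)
    (continuous_iff_continuousAt.2 fun t => (hx t).continuousAt).continuousOn
    (fun t _ => hx t)
  have h₁ := (hT ξ hξ.1.le).1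
  have h₂ := (hT T le_rfl).2
  rw [add_sub_cancel_left, div_one] at hslope
  rw [Real.dist_eq, hslope] at h₁
  rw [Real.dist_eq, sub_zero] at h₂
  linarith [abs_sub_abs_le_abs_sub (f l) (x (T + 1) - x T), abs_sub_comm (f l) (x (T + 1) - x T)]

theorem ODE_solution_strictMono_tendsto (hf : LipschitzOnWith K f (Icc a b)) (ha : f a = 0)
    (hb : f b = 0) (hpos : ∀ z ∈ Ioo a b, 0 < f z) (hx : ∀ t, HasDerivAt x (f (x t)) t)
    (h₀ : x t₀ ∈ Ioo a b) : StrictMono x ∧ Tendsto x atTop (𝓝 b) := by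
  have hmem := ODE_solution_mem_Ioo hf ha hb hx h₀
  have hmono : StrictMono x := strictMono_of_deriv_pos fun t => (hx t).deriv ▸ hpos _ (hmem t)
  have hbdd : BddAbove (range x) := ⟨b, forall_mem_range.2 fun t => (hmem t).2.le⟩
  have hl := tendsto_atTop_ciSup hmono.monotone hbdd
  have hal : a < ⨆ t, x t := (hmem t₀).1.trans_le (le_ciSup hbdd t₀)
  have hlb : ⨆ t, x t ≤ b := ciSup_le fun t => (hmem t).2.le
  have hfl := ODE_rhs_eq_zero_of_tendsto hx (fun t => Ioo_subset_Icc_self (hmem t))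
    (hf.continuousOn _ ⟨hal.le, hlb⟩) hl
  obtain hlb | hlb := hlb.eq_or_lt
  · exact ⟨hmono, hlb ▸ hl⟩
  · exact absurd hfl (hpos _ ⟨hal, hlb⟩).ne'

theorem ODE_solution_strictAnti_tendsto (hf : LipschitzOnWith K f (Icc a b)) (ha : f a = 0)
    (hb : f b = 0) (hneg : ∀ z ∈ Ioo a b, f z < 0) (hx : ∀ t, HasDerivAt x (f (x t)) t)
    (h₀ : x t₀ ∈ Ioo a b) : StrictAnti x ∧ Tendsto x atTop (𝓝 a) := by
  -- reflect space: `-x` solves `y' = -f (-y)`, which is positive on `(-b, -a)`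
  have hf' : LipschitzOnWith K (fun z => -f (-z)) (Icc (-b) (-a)) :=
    .of_dist_le_mul fun z hz w hw => by
      simpa [dist_neg_neg] using hf.dist_le_mul (-z) ⟨le_neg.2 hz.2, neg_le.2 hz.1⟩ (-w)
        ⟨le_neg.2 hw.2, neg_le.2 hw.1⟩
  have := ODE_solution_strictMono_tendsto (x := fun t => -x t) hf' (by simpa using hb)
    (by simpa using ha) (fun z hz => neg_pos.2 (hneg (-z) ⟨lt_neg.1 hz.2, neg_lt.1 hz.1⟩))
    (fun t => (hx t).neg.congr_deriv (by simp)) (t₀ := t₀)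
    ⟨neg_lt_neg h₀.2, neg_lt_neg h₀.1⟩
  exact ⟨fun s t hst => neg_lt_neg_iff.1 (this.1 hst), by simpa using this.2.neg⟩

end Autonomous

noncomputable def hillRate (n lam2 lam3 k x : ℝ) : ℝ :=
  lam2 * x ^ n / (lam3 ^ n + x ^ n) - k * x

section Hill

variable {n lam2 lam3 k : ℝ}

theorem hillRate_zero (hn : 0 < n) : hillRate n lam2 lam3 k 0 = 0 := by
  simp [hillRate, zero_rpow hn.ne']

theorem hillRate_denom_pos (h3 : 0 < lam3) {x : ℝ} (hx : 0 ≤ x) : 0 < lam3 ^ n + x ^ n :=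
  add_pos_of_pos_of_nonneg (rpow_pos_of_pos h3 n) (rpow_nonneg hx n)

theorem contDiffOn_hillRate (hn : 1 ≤ n) (h3 : 0 < lam3) :
    ContDiffOn ℝ 1 (hillRate n lam2 lam3 k) (Ici 0) := by
  have hp : ContDiff ℝ 1 fun x : ℝ => x ^ n := contDiff_rpow_const_of_le (by exact_mod_cast hn)
  exact ((contDiffOn_const.mul hp.contDiffOn).div (contDiffOn_const.add hp.contDiffOn)
    fun x hx => (hillRate_denom_pos h3 hx).ne').sub (contDiffOn_const.mul contDiffOn_id)

theorem exists_hillRate_neg_of_lt (hn : 1 < n) (h3 : 0 < lam3) (hk : 0 < k) {ε : ℝ}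
    (hε : 0 < ε) : ∃ z ∈ Ioo 0 ε, hillRate n lam2 lam3 k z < 0 := by
  set g : ℝ → ℝ := fun z => lam2 * z ^ (n - 1) / (lam3 ^ n + z ^ n) - k
  have hg : ContinuousAt g 0 :=
    ((continuousAt_const.mul (continuousAt_rpow_const _ _ (Or.inr (by linarith)))).div
      (continuousAt_const.add (continuousAt_rpow_const _ _ (Or.inr (by linarith))))
      (hillRate_denom_pos h3 le_rfl).ne').sub continuousAt_const
  have hg0 : g 0 < 0 := by simp [g, zero_rpow (show n - 1 ≠ 0 by linarith), hk]
  obtain ⟨z, hgz, hz⟩ := ((hg.eventually (gt_mem_nhds hg0)).filter_mono nhdsWithin_le_nhds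
    |>.and (Ioo_mem_nhdsGT hε)).exists
  refine ⟨z, hz, ?_⟩
  have hsplit : hillRate n lam2 lam3 k z = z * g z := by
    have := (hillRate_denom_pos (n := n) h3 hz.1.le).ne'
    have := hz.1.ne'
    simp only [hillRate, g, rpow_sub_one hz.1.ne']
    field_simp
  rw [hsplit]
  exact mul_neg_of_pos_of_neg hz.1 hgz

theorem hillRate_neg_of_div_lt (h2 : 0 ≤ lam2) (h3 : 0 < lam3) (hk : 0 < k) {z : ℝ}
    (hz : lam2 / k < z) : hillRate n lam2 lam3 k z < 0 := by
  have hz0 : 0 < z := (div_nonneg h2 hk.le).trans_lt hz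
  have hden := hillRate_denom_pos (n := n) h3 hz0.le
  have hfrac : lam2 * z ^ n / (lam3 ^ n + z ^ n) ≤ lam2 := by
    rw [div_le_iff₀ hden]
    nlinarith [rpow_pos_of_pos h3 n]
  have : lam2 < k * z := by rwa [div_lt_iff₀' hk] at hz
  unfold hillRate
  linarith

/-- The point `lam3 * (n - 1) ^ (1 / n)` maximises the per-capita activation
`x ^ (n - 1) / (lam3 ^ n + x ^ n)`; `hcond` says exactly that the rate is positive there. -/
theorem hillRate_pos_at_peak (hn : 1 < n) (h3 : 0 < lam3)
    (hcond : lam2 * (n - 1) ^ ((n - 1) / n) > n * k * lam3) :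
    0 < hillRate n lam2 lam3 k (lam3 * (n - 1) ^ n⁻¹) := by
  have hn1 : 0 < n - 1 := by linarith
  have hn0 : 0 < n := by linarith
  set c := (n - 1) ^ n⁻¹ with hc
  have hcpos : 0 < c := rpow_pos_of_pos hn1 _
  have hpow : (lam3 * c) ^ n = lam3 ^ n * (n - 1) := by
    rw [mul_rpow h3.le hcpos.le, rpow_inv_rpow hn1.le hn0.ne']
  have hsplit : (n - 1) ^ ((n - 1) / n) * c = n - 1 := by
    rw [hc, ← rpow_add hn1, sub_div, div_self hn0.ne', one_div, sub_add_cancel, rpow_one]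
  have hl3 : 0 < lam3 ^ n := rpow_pos_of_pos h3 n
  have hval : hillRate n lam2 lam3 k (lam3 * c) = lam2 * (n - 1) / n - k * lam3 * c := by
    rw [hillRate, hpow]
    field_simp
    ring
  rw [hval, sub_pos, lt_div_iff₀ hn0, ← hsplit]
  nlinarith [mul_lt_mul_of_pos_right hcond hcpos]

theorem hillRate_neg_of_mem_Ioo (hn : 1 < n) (h3 : 0 < lam3) (hk : 0 < k) {u s : ℝ}
    (hu : 0 < u) (hus : u < s)
    (hzeros : ∀ y, 0 < y → hillRate n lam2 lam3 k y = 0 → y = u ∨ y = s) :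
    ∀ z ∈ Ioo 0 u, hillRate n lam2 lam3 k z < 0 := by
  obtain ⟨p, hp, hfp⟩ := exists_hillRate_neg_of_lt (lam2 := lam2) hn h3 hk hu
  refine isPreconnected_Ioo.forall_neg_of_ne_zero
    ((contDiffOn_hillRate hn.le h3).continuousOn.mono fun z hz => le_of_lt hz.1)
    (fun z hz h0 => ?_) hp hfp
  rcases hzeros z hz.1 h0 with rfl | rfl <;> linarith [hz.2]

theorem hillRate_neg_of_mem_Ioi (hn : 1 < n) (h2 : 0 ≤ lam2) (h3 : 0 < lam3) (hk : 0 < k)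
    {u s : ℝ} (hu : 0 < u) (hus : u < s)
    (hzeros : ∀ y, 0 < y → hillRate n lam2 lam3 k y = 0 → y = u ∨ y = s) :
    ∀ z ∈ Ioi s, hillRate n lam2 lam3 k z < 0 := by
  have hs : 0 < s := hu.trans hus
  have hp : s < max s (lam2 / k) + 1 := by linarith [le_max_left s (lam2 / k)]
  refine isPreconnected_Ioi.forall_neg_of_ne_zero
    ((contDiffOn_hillRate hn.le h3).continuousOn.mono fun z (hz : s < z) => (hs.trans hz).le)
    (fun z (hz : s < z) h0 => ?_) hp
    (hillRate_neg_of_div_lt h2 h3 hk (by linarith [le_max_right s (lam2 / k)]))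
  rcases hzeros z (hs.trans hz) h0 with rfl | rfl <;> linarith

theorem hillRate_pos_of_mem_Ioo (hn : 1 < n) (h2 : 0 ≤ lam2) (h3 : 0 < lam3) (hk : 0 < k)
    (hcond : lam2 * (n - 1) ^ ((n - 1) / n) > n * k * lam3) {u s : ℝ} (hu : 0 < u) (hus : u < s)
    (hfu : hillRate n lam2 lam3 k u = 0) (hfs : hillRate n lam2 lam3 k s = 0)
    (hzeros : ∀ y, 0 < y → hillRate n lam2 lam3 k y = 0 → y = u ∨ y = s) :
    ∀ z ∈ Ioo u s, 0 < hillRate n lam2 lam3 k z := by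
  set p := lam3 * (n - 1) ^ n⁻¹
  have hfp : 0 < hillRate n lam2 lam3 k p := hillRate_pos_at_peak hn h3 hcond
  have hp0 : 0 < p := mul_pos h3 (rpow_pos_of_pos (by linarith) _)
  have hup : u < p := by
    rcases lt_trichotomy p u with h | rfl | h
    · exact absurd hfp (hillRate_neg_of_mem_Ioo hn h3 hk hu hus hzeros p ⟨hp0, h⟩).not_gt
    · exact absurd hfu hfp.ne'
    · exact h
  have hps : p < s := by
    rcases lt_trichotomy p s with h | rfl | h
    · exact h
    · exact absurd hfs hfp.ne'
    · exact absurd hfp (hillRate_neg_of_mem_Ioi hn h2 h3 hk hu hus hzeros p h).not_gt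
  refine isPreconnected_Ioo.forall_pos_of_ne_zero
    ((contDiffOn_hillRate hn.le h3).continuousOn.mono fun z hz => (hu.trans hz.1).le)
    (fun z hz h0 => ?_) ⟨hup, hps⟩ hfp
  rcases hzeros z (hu.trans hz.1) h0 with rfl | rfl
  exacts [lt_irrefl _ hz.1, lt_irrefl _ hz.2]

end Hill

theorem stmt_7 (n lam2 lam3 k : ℝ) (hn : 1 < n) (h2 : 0 < lam2) (h3 : 0 < lam3)
    (hk : 0 < k)
    (f : ℝ → ℝ) (hf : ∀ x, f x = lam2 * x ^ n / (lam3 ^ n + x ^ n) - k * x)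
    (hcond : lam2 * (n - 1) ^ ((n - 1) / n) > n * k * lam3)
    (Tbu Tbs : ℝ) (hu : 0 < Tbu) (hus : Tbu < Tbs)
    (hfu : f Tbu = 0) (hfs : f Tbs = 0)
    (honly : ∀ y, 0 < y → f y = 0 → y = Tbu ∨ y = Tbs)
    (x : ℝ → ℝ) (hx : ∀ t, HasDerivAt x (f (x t)) t) :
    (x 0 ∈ Ioo Tbu Tbs → StrictMono x ∧ Tendsto x atTop (nhds Tbs)) ∧
      (x 0 ∈ Ioo 0 Tbu → StrictAnti x ∧ Tendsto x atTop (nhds 0)) := by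
  obtain rfl : f = hillRate n lam2 lam3 k := funext hf
  obtain ⟨K, hK⟩ := ContDiffOn.exists_lipschitzOnWith
    ((contDiffOn_hillRate hn.le h3).mono Icc_subset_Ici_self) one_ne_zero (convex_Icc 0 Tbs)
    isCompact_Icc
  have hpos := hillRate_pos_of_mem_Ioo hn h2.le h3 hk hcond hu hus hfu hfs honly
  have hneg := hillRate_neg_of_mem_Ioo hn h3 hk hu hus honly
  exact ⟨fun h₀ => ODE_solution_strictMono_tendsto (hK.mono (Icc_subset_Icc_left hu.le))
      hfu hfs hpos hx h₀,
    fun h₀ => ODE_solution_strictAnti_tendsto (hK.mono (Icc_subset_Icc_right hus.le))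
      (hillRate_zero (by linarith)) hfu hneg hx h₀⟩
end

section
/- Let n > 1 and λ2, λ3, k > 0 be such that the bistability condition λ2 (n-1)^((n-1)/n) > n k λ3 holds, with positive steady states Tb_u < Tb_s of f(x) = λ2 x^n/(λ3^n + x^n) - k x. If x solves x' = f(x) with x(0) > Tb_s, then x is strictly decreasing and converges to Tb_s. -/
open Real Set Filter

lemma aux_deriv (n lam2 lam3 k : ℝ) (h3 : 0 < lam3)
    (f : ℝ → ℝ) (hf : ∀ x, f x = lam2 * x ^ n / (lam3 ^ n + x ^ n) - k * x)
    {y : ℝ} (hy : 0 < y) :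
    HasDerivAt f ((lam2 * (n * y ^ (n-1)) * (lam3 ^ n + y ^ n)
      - lam2 * y ^ n * (n * y ^ (n-1))) / (lam3 ^ n + y ^ n) ^ 2 - k * 1) y := by
  have hden : lam3 ^ n + y ^ n ≠ 0 := by positivity
  have h1 : HasDerivAt (fun x : ℝ => x ^ n) (n * y ^ (n-1)) y :=
    Real.hasDerivAt_rpow_const (Or.inl hy.ne')
  have hq := ((h1.const_mul lam2).div (h1.const_add (lam3 ^ n)) hden).sub
    ((hasDerivAt_id y).const_mul k)
  exact hq.congr_of_eventuallyEq (Eventually.of_forall fun z => by simp [hf z])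

set_option maxHeartbeats 1000000 in
lemma aux_cont (n lam2 lam3 k : ℝ) (h3 : 0 < lam3) :
    ∀ y : ℝ, 0 < y → ContinuousAt (fun y : ℝ => (lam2 * (n * y ^ (n-1)) * (lam3 ^ n + y ^ n)
      - lam2 * y ^ n * (n * y ^ (n-1))) / (lam3 ^ n + y ^ n) ^ 2 - k * 1) y := by
  intro y hy
  have hden : (lam3 ^ n + y ^ n) ^ 2 ≠ 0 := by positivity
  have h1 : ContinuousAt (fun x : ℝ => x ^ n) y :=
    Real.continuousAt_rpow_const _ _ (Or.inl hy.ne')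
  have h2 : ContinuousAt (fun x : ℝ => x ^ (n-1)) y :=
    Real.continuousAt_rpow_const _ _ (Or.inl hy.ne')
  exact ((((continuousAt_const.mul (continuousAt_const.mul h2)).mul (continuousAt_const.add h1)).sub
    ((continuousAt_const.mul h1).mul (continuousAt_const.mul h2))).div
    ((continuousAt_const.add h1).pow 2) hden).sub continuousAt_const

lemma aux_fneg (n lam2 lam3 k : ℝ) (h2 : 0 < lam2) (h3 : 0 < lam3) (hk : 0 < k)
    (f : ℝ → ℝ) (hf : ∀ x, f x = lam2 * x ^ n / (lam3 ^ n + x ^ n) - k * x)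
    (Tbu Tbs : ℝ) (hu : 0 < Tbu) (hus : Tbu < Tbs)
    (honly : ∀ y, 0 < y → f y = 0 → y = Tbu ∨ y = Tbs)
    (hcf : ∀ y : ℝ, 0 < y → ContinuousAt f y) :
    ∀ y, Tbs < y → f y < 0 := by
  intro y hy
  by_contra hcon
  push_neg at hcon
  have hTbs : 0 < Tbs := hu.trans hus
  have hy0 : 0 < y := hTbs.trans hy
  set z : ℝ := max (y + 1) (lam2 / k + 1) with hzdef
  have hz1 : y + 1 ≤ z := le_max_left _ _
  have hz2 : lam2 / k + 1 ≤ z := le_max_right _ _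
  have hyz : y ≤ z := by linarith
  have hz0 : 0 < z := by positivity
  have hfz : f z < 0 := by
    rw [hf z]
    have hD : 0 < lam3 ^ n + z ^ n := by positivity
    have hfrac : lam2 * z ^ n / (lam3 ^ n + z ^ n) < lam2 := by
      rw [div_lt_iff₀ hD]
      have : (0:ℝ) < z ^ n := by positivity
      have h3n : (0:ℝ) < lam3 ^ n := by positivity
      nlinarith
    have hkz : lam2 + k ≤ k * z := by
      have := (div_le_iff₀ hk).mp (by linarith : lam2 / k ≤ z - 1)
      linarith
    linarith
  have hcont : ContinuousOn f (Icc y z) := fun w hw =>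
    (hcf w (lt_of_lt_of_le hy0 hw.1)).continuousWithinAt
  have h0mem : (0:ℝ) ∈ Icc (f z) (f y) := ⟨hfz.le, hcon⟩
  obtain ⟨w, hw, hfw⟩ := intermediate_value_Icc' hyz hcont h0mem
  have hw0 : 0 < w := lt_of_lt_of_le hy0 hw.1
  rcases honly w hw0 hfw with h | h
  · exact absurd h (by have := hw.1; intro e; rw [e] at this; linarith)
  · exact absurd h (by have := hw.1; intro e; rw [e] at this; linarith)

lemma aux_stay (n lam2 lam3 k : ℝ) (h3 : 0 < lam3)
    (f : ℝ → ℝ) (hf : ∀ x, f x = lam2 * x ^ n / (lam3 ^ n + x ^ n) - k * x)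
    (Tbs : ℝ) (hTbs : 0 < Tbs) (hfs : f Tbs = 0)
    (hfneg : ∀ y, Tbs < y → f y < 0)
    (x : ℝ → ℝ) (hx : ∀ t, HasDerivAt x (f (x t)) t) (hx0 : Tbs < x 0) :
    ∀ t, Tbs < x t := by
  have hxc : Continuous x := continuous_iff_continuousAt.2 fun t => (hx t).continuousAt
  have hfnonpos : ∀ y, Tbs ≤ y → f y ≤ 0 := by
    intro y hy
    rcases hy.eq_or_lt with h | h
    · rw [← h, hfs]
    · exact (hfneg y h).le
  intro t1
  by_contra hcon
  push_neg at hcon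
  rcases lt_trichotomy t1 0 with ht1 | ht1 | ht1
  · -- backward case
    set S : Set ℝ := Icc t1 0 ∩ x ⁻¹' {Tbs} with hSdef
    have hScl : IsClosed S := isClosed_Icc.inter (isClosed_singleton.preimage hxc)
    have hSne : S.Nonempty := by
      obtain ⟨s, hs, hxs⟩ := intermediate_value_Icc ht1.le hxc.continuousOn
        (⟨hcon, hx0.le⟩ : Tbs ∈ Icc (x t1) (x 0))
      exact ⟨s, hs, hxs⟩
    have hSbdd : BddAbove S := ⟨0, fun s hs => hs.1.2⟩
    set t2 := sSup S with ht2def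
    have ht2S : t2 ∈ S := hScl.csSup_mem hSne hSbdd
    have hxt2 : x t2 = Tbs := ht2S.2
    have ht2le : t2 ≤ 0 := ht2S.1.2
    have ht2lt : t2 < 0 := lt_of_le_of_ne ht2le (by intro e; rw [e] at hxt2; linarith)
    have hge : ∀ t ∈ Icc t2 (0:ℝ), Tbs ≤ x t := by
      intro t ht
      by_contra hlt
      push_neg at hlt
      have htne : t ≠ t2 := by intro e; rw [e, hxt2] at hlt; linarith
      have htgt : t2 < t := lt_of_le_of_ne ht.1 (Ne.symm htne)
      obtain ⟨s, hs, hxs⟩ := intermediate_value_Icc ht.2 hxc.continuousOn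
        (⟨hlt.le, hx0.le⟩ : Tbs ∈ Icc (x t) (x 0))
      have hsS : s ∈ S := ⟨⟨le_trans ht2S.1.1 (le_trans htgt.le hs.1), hs.2⟩, hxs⟩
      have := le_csSup hSbdd hsS
      have := hs.1
      linarith
    have hanti : AntitoneOn x (Icc t2 0) := by
      apply antitoneOn_of_deriv_nonpos (convex_Icc t2 0) hxc.continuousOn
      · exact fun t _ => (hx t).differentiableAt.differentiableWithinAt
      · intro t ht
        rw [interior_Icc] at ht
        rw [(hx t).deriv]
        exact hfnonpos _ (hge t ⟨ht.1.le, ht.2.le⟩)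
    have := hanti (left_mem_Icc.2 ht2le) (right_mem_Icc.2 ht2le) ht2le
    rw [hxt2] at this
    linarith
  · rw [ht1] at hcon; linarith
  · -- forward case
    set S : Set ℝ := Icc 0 t1 ∩ x ⁻¹' {Tbs} with hSdef
    have hScl : IsClosed S := isClosed_Icc.inter (isClosed_singleton.preimage hxc)
    have hSne : S.Nonempty := by
      obtain ⟨s, hs, hxs⟩ := intermediate_value_Icc' ht1.le hxc.continuousOn
        (⟨hcon, hx0.le⟩ : Tbs ∈ Icc (x t1) (x 0))
      exact ⟨s, hs, hxs⟩
    have hSbdd : BddBelow S := ⟨0, fun s hs => hs.1.1⟩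
    set t2 := sInf S with ht2def
    have ht2S : t2 ∈ S := hScl.csInf_mem hSne hSbdd
    have hxt2 : x t2 = Tbs := ht2S.2
    have ht2le : 0 ≤ t2 := ht2S.1.1
    have ht2lt : 0 < t2 := lt_of_le_of_ne ht2le (by intro e; rw [← e] at hxt2; linarith)
    have hge : ∀ t ∈ Icc (0:ℝ) t2, Tbs ≤ x t := by
      intro t ht
      by_contra hlt
      push_neg at hlt
      obtain ⟨s, hs, hxs⟩ := intermediate_value_Icc' ht.1 hxc.continuousOn
        (⟨hlt.le, hx0.le⟩ : Tbs ∈ Icc (x t) (x 0))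
      have htlt : t < t2 := lt_of_le_of_ne ht.2
        (by intro e; rw [e, hxt2] at hlt; linarith)
      have hsS : s ∈ S := ⟨⟨hs.1, le_trans hs.2 (le_trans htlt.le ht2S.1.2)⟩, hxs⟩
      have := csInf_le hSbdd hsS
      have := hs.2
      linarith
    -- bound on x over [0, t2]
    obtain ⟨M, hM⟩ := (isCompact_Icc (a := (0:ℝ)) (b := t2)).exists_bound_of_continuousOn
      hxc.continuousOn
    have hxM : ∀ t ∈ Icc (0:ℝ) t2, x t ∈ Icc Tbs M := fun t ht =>
      ⟨hge t ht, le_trans (le_abs_self _) (hM t ht)⟩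
    have hTbsM : Tbs ≤ M := hxt2 ▸ (hxM t2 (right_mem_Icc.2 ht2le)).2
    -- Lipschitz-type bound for f on [Tbs, M]
    set F' : ℝ → ℝ := fun y => (lam2 * (n * y ^ (n-1)) * (lam3 ^ n + y ^ n)
      - lam2 * y ^ n * (n * y ^ (n-1))) / (lam3 ^ n + y ^ n) ^ 2 - k * 1 with hF'def
    obtain ⟨C, hC⟩ := (isCompact_Icc (a := Tbs) (b := M)).exists_bound_of_continuousOn
      (fun u hu => (aux_cont n lam2 lam3 k h3 u (lt_of_lt_of_le hTbs hu.1)).continuousWithinAt)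
    have hlow : ∀ u ∈ Icc Tbs M, -(C * (u - Tbs)) ≤ f u := by
      have hseg := norm_image_sub_le_of_norm_deriv_le_segment'
        (f := f) (f' := F') (a := Tbs) (b := M) (C := C)
        (fun u hu => (aux_deriv n lam2 lam3 k h3 f hf
          (lt_of_lt_of_le hTbs hu.1)).hasDerivWithinAt)
        (fun u hu => hC u ⟨hu.1, hu.2.le⟩)
      intro u hu
      have := hseg u hu
      rw [hfs, sub_zero] at this
      have := abs_le.1 this
      linarith [this.1]
    -- monotone auxiliary function
    set h : ℝ → ℝ := fun t => Real.exp (C * t) * (x t - Tbs) with hhdef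
    have hder : ∀ t : ℝ, HasDerivAt h
        (Real.exp (C * t) * (C * 1) * (x t - Tbs) + Real.exp (C * t) * f (x t)) t := by
      intro t
      exact (((hasDerivAt_id t).const_mul C).exp).mul ((hx t).sub_const Tbs)
    have hmono : MonotoneOn h (Icc 0 t2) := by
      apply monotoneOn_of_deriv_nonneg (convex_Icc 0 t2)
      · exact Continuous.continuousOn (by continuity)
      · exact fun t _ => (hder t).differentiableAt.differentiableWithinAt
      · intro t ht
        rw [interior_Icc] at ht
        rw [(hder t).deriv]
        have hmem := hxM t ⟨ht.1.le, ht.2.le⟩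
        have h1 := hlow _ hmem
        have h2 : Tbs ≤ x t := hmem.1
        have hE : 0 < Real.exp (C * t) := Real.exp_pos _
        nlinarith [mul_le_mul_of_nonneg_left h1 hE.le]
    have := hmono (left_mem_Icc.2 ht2le) (right_mem_Icc.2 ht2le) ht2le
    simp only [hhdef, hxt2, mul_zero, sub_self] at this
    rw [Real.exp_zero, one_mul] at this
    linarith

theorem stmt_8 (n lam2 lam3 k : ℝ) (hn : 1 < n) (h2 : 0 < lam2) (h3 : 0 < lam3)
    (hk : 0 < k)
    (f : ℝ → ℝ) (hf : ∀ x, f x = lam2 * x ^ n / (lam3 ^ n + x ^ n) - k * x)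
    (hcond : lam2 * (n - 1) ^ ((n - 1) / n) > n * k * lam3)
    (Tbu Tbs : ℝ) (hu : 0 < Tbu) (hus : Tbu < Tbs)
    (hfu : f Tbu = 0) (hfs : f Tbs = 0)
    (honly : ∀ y, 0 < y → f y = 0 → y = Tbu ∨ y = Tbs)
    (x : ℝ → ℝ) (hx : ∀ t, HasDerivAt x (f (x t)) t)
    (hx0 : Tbs < x 0) :
    StrictAnti x ∧ Tendsto x atTop (nhds Tbs) := by
  have hTbs : 0 < Tbs := hu.trans hus
  have hcf : ∀ y : ℝ, 0 < y → ContinuousAt f y := fun y hy =>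
    (aux_deriv n lam2 lam3 k h3 f hf hy).continuousAt
  have hfneg : ∀ y, Tbs < y → f y < 0 :=
    aux_fneg n lam2 lam3 k h2 h3 hk f hf Tbu Tbs hu hus honly hcf
  have hstay : ∀ t, Tbs < x t :=
    aux_stay n lam2 lam3 k h3 f hf Tbs hTbs hfs hfneg x hx hx0
  have hxc : Continuous x := continuous_iff_continuousAt.2 fun t => (hx t).continuousAt
  have hstrict : StrictAnti x := by
    apply strictAnti_of_deriv_neg
    intro t
    rw [(hx t).deriv]
    exact hfneg _ (hstay t)
  refine ⟨hstrict, ?_⟩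
  have hanti : Antitone x := hstrict.antitone
  have hbdd : BddBelow (range x) := by
    refine ⟨Tbs, ?_⟩
    rintro v ⟨t, rfl⟩
    exact (hstay t).le
  have htend : Tendsto x atTop (nhds (⨅ t, x t)) := tendsto_atTop_ciInf hanti hbdd
  set L := ⨅ t, x t with hLdef
  have hL : Tbs ≤ L := le_ciInf fun t => (hstay t).le
  rcases hL.eq_or_lt with hLe | hLlt
  · rwa [← hLe] at htend
  · exfalso
    have hmvt : ∀ m : ℕ, ∃ c ∈ Ioo (m:ℝ) (m+1),
        f (x c) = (x (m+1) - x m) / ((m:ℝ) + 1 - m) := by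
      intro m
      exact exists_hasDerivAt_eq_slope x (fun t => f (x t)) (by linarith)
        hxc.continuousOn (fun t _ => hx t)
    choose ξ hmem heq using hmvt
    have hnat : Tendsto (fun m : ℕ => x m) atTop (nhds L) :=
      htend.comp tendsto_natCast_atTop_atTop
    have hnat1 : Tendsto (fun m : ℕ => x ((m:ℝ) + 1)) atTop (nhds L) :=
      htend.comp (tendsto_atTop_add_const_right _ 1 tendsto_natCast_atTop_atTop)
    have hxi : Tendsto (fun m : ℕ => x (ξ m)) atTop (nhds L) :=
      tendsto_of_tendsto_of_tendsto_of_le_of_le hnat1 hnat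
        (fun m => hanti (hmem m).2.le) (fun m => hanti (hmem m).1.le)
    have hfxi : Tendsto (fun m : ℕ => f (x (ξ m))) atTop (nhds (f L)) :=
      (hcf L (hTbs.trans hLlt)).tendsto.comp hxi
    have hslope : Tendsto (fun m : ℕ => f (x (ξ m))) atTop (nhds 0) := by
      have h0 : Tendsto (fun m : ℕ => x ((m:ℝ) + 1) - x m) atTop (nhds (L - L)) :=
        hnat1.sub hnat
      rw [sub_self] at h0
      refine h0.congr fun m => ?_
      rw [heq m]
      simp
    have hfL0 : f L = 0 := tendsto_nhds_unique hfxi hslope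
    exact absurd hfL0 (hfneg L hLlt).ne
end

section
/- Let n > 1 and λ2, λ3 > 0, and set k* = λ2 (n-1)^((n-1)/n) / (n λ3). Then for every k ∈ (0, k*) the equation λ2 x^(n-1)/(λ3^n + x^n) = k has exactly two solutions in (0, ∞), for k = k* exactly one, and for k > k* none. -/
/-!
On `(0, ∞)` the function `g` equals `λ₂ / φ` with `φ x = λ₃ⁿ x^(1-n) + x`. Since
`φ' x = 1 - (n-1) λ₃ⁿ / xⁿ`, `φ` decreases strictly up to `x* = λ₃ (n-1)^(1/n)`, increases
strictly afterwards, and tends to `∞` at both ends of `(0, ∞)`. Hence `g` has a strict peak at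
`x*`, of height `k*`, and tends to `0` at both ends; the intermediate value theorem on each side
of the peak then counts the solutions of `g x = k`.
-/

open Real Set Filter Topology

structure IsStrictPeak (f : ℝ → ℝ) (l m : ℝ) : Prop where
  strictMonoOn : StrictMonoOn f (Ioc l m)
  strictAntiOn : StrictAntiOn f (Ici m)

namespace IsStrictPeak

variable {f : ℝ → ℝ} {l m : ℝ}

theorem apply_lt_of_ne (hf : IsStrictPeak f l m) {x : ℝ} (hx : l < x) (hxm : x ≠ m) :
    f x < f m := by
  rcases hxm.lt_or_gt with hlt | hgt
  · exact hf.strictMonoOn ⟨hx, hlt.le⟩ ⟨hx.trans hlt, le_rfl⟩ hlt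
  · exact hf.strictAntiOn self_mem_Ici hgt.le hgt

theorem apply_le (hf : IsStrictPeak f l m) {x : ℝ} (hx : l < x) : f x ≤ f m := by
  rcases eq_or_ne x m with rfl | hxm
  · exact le_rfl
  · exact (hf.apply_lt_of_ne hx hxm).le

theorem eq_or_eq (hf : IsStrictPeak f l m) {a b x c : ℝ} (ha : a ∈ Ioc l m) (hb : b ∈ Ici m)
    (hx : l < x) (hfa : f a = c) (hfb : f b = c) (hfx : f x = c) : x = a ∨ x = b := by
  rcases le_total x m with hxm | hmx
  · exact Or.inl (hf.strictMonoOn.injOn ⟨hx, hxm⟩ ha (hfx.trans hfa.symm))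
  · exact Or.inr (hf.strictAntiOn.injOn hmx hb (hfx.trans hfb.symm))

theorem exists_two_preimages (hf : IsStrictPeak f l m) (hlm : l < m)
    (hcont : ContinuousOn f (Ioi l)) {v : ℝ} (hl : Tendsto f (𝓝[>] l) (𝓝 v))
    (htop : Tendsto f atTop (𝓝 v)) {c : ℝ} (hc : c ∈ Ioo v (f m)) :
    ∃ a b, l < a ∧ a < b ∧ f a = c ∧ f b = c ∧ ∀ x, l < x → f x = c → x = a ∨ x = b := by
  have hleft : Ioc v (f m) ⊆ f '' Ioc l m :=
    isPreconnected_Ioc.intermediate_value_Ioc ⟨hlm, le_rfl⟩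
      (le_principal_iff.mpr (Ioc_mem_nhdsGT hlm)) (hcont.mono Ioc_subset_Ioi_self) hl
  have hright : Ioc v (f m) ⊆ f '' Ici m :=
    isPreconnected_Ici.intermediate_value_Ioc self_mem_Ici
      (le_principal_iff.mpr (Ici_mem_atTop m))
      (hcont.mono fun _ hx => hlm.trans_le hx) htop
  obtain ⟨a, ha, hfa⟩ := hleft (Ioo_subset_Ioc_self hc)
  obtain ⟨b, hb, hfb⟩ := hright (Ioo_subset_Ioc_self hc)
  have ham : a < m := lt_of_le_of_ne ha.2 fun h => hc.2.ne (h ▸ hfa).symm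
  have hmb : m < b := lt_of_le_of_ne hb fun h => hc.2.ne (h ▸ hfb).symm
  exact ⟨a, b, ha.1, ham.trans hmb, hfa, hfb,
    fun x hx hfx => hf.eq_or_eq ha hb hx hfa hfb hfx⟩

end IsStrictPeak

noncomputable def phi (n lam3 x : ℝ) : ℝ := lam3 ^ n * x ^ (1 - n) + x

noncomputable def xCrit (n lam3 : ℝ) : ℝ := lam3 * (n - 1) ^ n⁻¹

noncomputable def hill (n lam2 lam3 x : ℝ) : ℝ := lam2 * x ^ (n - 1) / (lam3 ^ n + x ^ n)

section

variable {n lam2 lam3 x : ℝ}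

theorem xCrit_pos (hn : 1 < n) (h3 : 0 < lam3) : 0 < xCrit n lam3 :=
  mul_pos h3 (rpow_pos_of_pos (sub_pos.2 hn) _)

theorem xCrit_rpow (hn : 1 < n) (h3 : 0 ≤ lam3) : xCrit n lam3 ^ n = (n - 1) * lam3 ^ n := by
  have hn1 : 0 ≤ n - 1 := by linarith
  rw [xCrit, mul_rpow h3 (rpow_nonneg hn1 _), ← rpow_mul hn1,
    inv_mul_cancel₀ (by linarith : n ≠ 0), rpow_one, mul_comm]

theorem phi_pos (h3 : 0 ≤ lam3) (hx : 0 < x) : 0 < phi n lam3 x := by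
  unfold phi; positivity

theorem hasDerivAt_phi (hx : 0 < x) :
    HasDerivAt (phi n lam3) (1 - (n - 1) * lam3 ^ n / x ^ n) x := by
  have hpow := (hasDerivAt_rpow_const (p := 1 - n) (Or.inl hx.ne')).const_mul (lam3 ^ n)
  refine (hpow.add (hasDerivAt_id x)).congr_deriv ?_
  rw [show 1 - n - 1 = -n by ring, rpow_neg hx.le]
  ring

theorem continuousOn_phi : ContinuousOn (phi n lam3) (Ioi 0) :=
  fun _ hx => (hasDerivAt_phi hx).continuousAt.continuousWithinAt

theorem strictAntiOn_phi (hn : 1 < n) (h3 : 0 ≤ lam3) :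
    StrictAntiOn (phi n lam3) (Ioc 0 (xCrit n lam3)) := by
  refine strictAntiOn_of_deriv_neg (convex_Ioc 0 _) (continuousOn_phi.mono Ioc_subset_Ioi_self)
    fun x hx => ?_
  rw [interior_Ioc] at hx
  have hxn : x ^ n < (n - 1) * lam3 ^ n :=
    xCrit_rpow hn h3 ▸ rpow_lt_rpow hx.1.le hx.2 (by linarith)
  rw [(hasDerivAt_phi hx.1).deriv, sub_neg, one_lt_div (rpow_pos_of_pos hx.1 n)]
  exact hxn

theorem strictMonoOn_phi (hn : 1 < n) (h3 : 0 < lam3) :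
    StrictMonoOn (phi n lam3) (Ici (xCrit n lam3)) := by
  have hm := xCrit_pos hn h3
  refine strictMonoOn_of_deriv_pos (convex_Ici _)
    (continuousOn_phi.mono fun _ hx => hm.trans_le hx) fun x hx => ?_
  rw [interior_Ici] at hx
  have hx0 : 0 < x := hm.trans hx
  have hxn : (n - 1) * lam3 ^ n < x ^ n :=
    xCrit_rpow hn h3.le ▸ rpow_lt_rpow hm.le hx (by linarith)
  rw [(hasDerivAt_phi hx0).deriv, sub_pos, div_lt_one (rpow_pos_of_pos hx0 n)]
  exact hxn

theorem tendsto_phi_nhdsGT_zero (hn : 1 < n) (h3 : 0 < lam3) :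
    Tendsto (phi n lam3) (𝓝[>] 0) atTop := by
  refine tendsto_atTop_mono' _ ?_
    ((tendsto_rpow_neg_nhdsGT_zero (by linarith : 1 - n < 0)).const_mul_atTop
      (rpow_pos_of_pos h3 n))
  filter_upwards [self_mem_nhdsWithin] with x (hx : 0 < x)
  exact le_add_of_nonneg_right hx.le

theorem tendsto_phi_atTop (h3 : 0 ≤ lam3) : Tendsto (phi n lam3) atTop atTop := by
  refine tendsto_atTop_mono' _ ?_ tendsto_id
  filter_upwards [eventually_gt_atTop 0] with x hx
  exact le_add_of_nonneg_left (by positivity)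

theorem hill_eq_div_phi (hx : 0 < x) : hill n lam2 lam3 x = lam2 / phi n lam3 x := by
  have hden : phi n lam3 x * x ^ (n - 1) = lam3 ^ n + x ^ n := by
    have hcancel : x ^ (1 - n) * x ^ (n - 1) = 1 := by
      rw [← rpow_add hx, sub_add_sub_cancel', sub_self, rpow_zero]
    have hsucc : x * x ^ (n - 1) = x ^ n := by
      rw [mul_comm, ← rpow_add_one hx.ne', sub_add_cancel]
    rw [phi]
    linear_combination lam3 ^ n * hcancel + hsucc
  rw [hill, ← hden, mul_div_mul_right _ _ (rpow_pos_of_pos hx _).ne']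

theorem strictMonoOn_hill (hn : 1 < n) (h2 : 0 < lam2) (h3 : 0 ≤ lam3) :
    StrictMonoOn (hill n lam2 lam3) (Ioc 0 (xCrit n lam3)) := fun x hx y hy hxy => by
  rw [hill_eq_div_phi hx.1, hill_eq_div_phi hy.1]
  exact div_lt_div_of_pos_left h2 (phi_pos h3 hy.1) (strictAntiOn_phi hn h3 hx hy hxy)

theorem strictAntiOn_hill (hn : 1 < n) (h2 : 0 < lam2) (h3 : 0 < lam3) :
    StrictAntiOn (hill n lam2 lam3) (Ici (xCrit n lam3)) := fun x hx y hy hxy => by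
  have hm := xCrit_pos hn h3
  rw [hill_eq_div_phi (hm.trans_le hx), hill_eq_div_phi (hm.trans_le hy)]
  exact div_lt_div_of_pos_left h2 (phi_pos h3.le (hm.trans_le hx))
    (strictMonoOn_phi hn h3 hx hy hxy)

theorem isStrictPeak_hill (hn : 1 < n) (h2 : 0 < lam2) (h3 : 0 < lam3) :
    IsStrictPeak (hill n lam2 lam3) 0 (xCrit n lam3) :=
  ⟨strictMonoOn_hill hn h2 h3.le, strictAntiOn_hill hn h2 h3⟩

theorem continuousOn_hill (h3 : 0 ≤ lam3) : ContinuousOn (hill n lam2 lam3) (Ioi 0) :=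
  (continuousOn_const.div continuousOn_phi fun _ hx => (phi_pos h3 hx).ne').congr
    fun _ hx => hill_eq_div_phi hx

theorem tendsto_hill_of_tendsto_phi {L : Filter ℝ} (hL : ∀ᶠ x in L, 0 < x)
    (hphi : Tendsto (phi n lam3) L atTop) : Tendsto (hill n lam2 lam3) L (𝓝 0) :=
  (tendsto_const_nhds.div_atTop hphi).congr' <| hL.mono fun _ hx => (hill_eq_div_phi hx).symm

theorem hill_xCrit (hn : 1 < n) (h3 : 0 < lam3) :
    hill n lam2 lam3 (xCrit n lam3) = lam2 * (n - 1) ^ ((n - 1) / n) / (n * lam3) := by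
  have hn1 : 0 < n - 1 := by linarith
  have hpow : xCrit n lam3 ^ (n - 1) * xCrit n lam3 = (n - 1) * lam3 ^ n := by
    rw [← rpow_add_one (xCrit_pos hn h3).ne', sub_add_cancel, xCrit_rpow hn h3.le]
  have hsplit : (n - 1) ^ ((n - 1) / n) * (n - 1) ^ n⁻¹ = n - 1 := by
    rw [← rpow_add hn1, show (n - 1) / n + n⁻¹ = 1 by field_simp; ring, rpow_one]
  have hQ : 0 < (n - 1) ^ n⁻¹ := rpow_pos_of_pos hn1 _
  have hden : lam3 ^ n + (n - 1) * lam3 ^ n ≠ 0 := by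
    have := rpow_pos_of_pos h3 n; nlinarith
  rw [hill, xCrit_rpow hn h3.le, div_eq_div_iff hden (by positivity)]
  -- multiplied by `(n - 1) ^ n⁻¹`, both sides become `lam2 * n * (n - 1) * lam3 ^ n`
  refine mul_right_cancel₀ hQ.ne' ?_
  rw [xCrit] at hpow ⊢
  linear_combination lam2 * n * hpow - lam2 * lam3 ^ n * n * hsplit

end

theorem stmt_18 (n lam2 lam3 : ℝ) (hn : 1 < n) (h2 : 0 < lam2) (h3 : 0 < lam3)
    (g : ℝ → ℝ) (hg : ∀ x, g x = lam2 * x ^ (n - 1) / (lam3 ^ n + x ^ n))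
    (kstar : ℝ) (hkstar : kstar = lam2 * (n - 1) ^ ((n - 1) / n) / (n * lam3)) :
    (∀ k, 0 < k → k < kstar →
        ∃ a b, 0 < a ∧ a < b ∧ g a = k ∧ g b = k ∧
          ∀ x, 0 < x → g x = k → x = a ∨ x = b) ∧
      (∃! x, 0 < x ∧ g x = kstar) ∧
      ∀ k, kstar < k → ∀ x, 0 < x → g x ≠ k := by
  obtain rfl : g = hill n lam2 lam3 := funext hg
  have hpeak := isStrictPeak_hill hn h2 h3
  have hmax : hill n lam2 lam3 (xCrit n lam3) = kstar := hkstar ▸ hill_xCrit hn h3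
  refine ⟨fun k hk hkk => ?_, ⟨xCrit n lam3, ⟨xCrit_pos hn h3, hmax⟩, ?_⟩,
    fun k hk x hx hgx => ?_⟩
  · exact hpeak.exists_two_preimages (xCrit_pos hn h3) (continuousOn_hill h3.le)
      (tendsto_hill_of_tendsto_phi self_mem_nhdsWithin (tendsto_phi_nhdsGT_zero hn h3))
      (tendsto_hill_of_tendsto_phi (eventually_gt_atTop 0) (tendsto_phi_atTop h3.le))
      ⟨hk, hmax ▸ hkk⟩
  · rintro x ⟨hx, hgx⟩
    by_contra hxm
    exact (hpeak.apply_lt_of_ne hx hxm).ne (hgx.trans hmax.symm)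
  · exact (hpeak.apply_le hx).not_gt (hgx ▸ hmax ▸ hk)
end
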